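/- arXiv:1104.0753 — 5 statements merged into one kernel-verified Lean document; each statement's English description precedes it below -/
import Mathlib

section
/- Let S be a finite nonempty set of points in the plane, let w_p > 0 be a weight for each p ∈ S, let ℓ > 0 be the highway length and v ≥ 1 the highway speed. Then the infimum, over all triples (f,t,t') of points of ℝ² with Euclidean distance ‖t−t'‖₂ = ℓ, of Σ_{p∈S} w_p · min{‖p−f‖₁, ‖p−t‖₁ + ℓ/v + ‖t'−f‖₁, ‖p−t'‖₁ + ℓ/v + ‖t−f‖₁} equals the infimum, over all pairs (f,t) of points of ℝ² with Euclidean distance ‖f−t‖₂ = ℓ, of Σ_{p∈S} w_p · min{‖p−f‖₁, ‖p−t‖₁ + ℓ/v}. In other words, the facility may be assumed to be located at one of the endpoints of the highway without changing the optimal total transportation cost. -/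
/-- The L1 (Manhattan) norm of a point of the plane. -/
def l1 (u : ℝ × ℝ) : ℝ := |u.1| + |u.2|

/-- The Euclidean norm of a point of the plane. -/
noncomputable def l2 (u : ℝ × ℝ) : ℝ := Real.sqrt (u.1 ^ 2 + u.2 ^ 2)

/-!
Translate the highway of a configuration `(f, t, t')` so that it ends at `f`, oriented so that
`l1 (t' - f) ≤ l1 (t - f) + ℓ / v` (one orientation always works since `ℓ / v ≥ 0`). A demand
point using the highway from `t` now skips the leg `t' → f`, and one using it from `t'` could
as well walk `t' → f` directly, so no travel time grows. Conversely `(f, t)` is the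
configuration `(f, f, t)`. The two sets of costs thus dominate each other elementwise, which
forces equal infima.
-/

lemma l1_zero : l1 0 = 0 := by
  simp [l1]

lemma l1_sub_le (a b c : ℝ × ℝ) : l1 (a - c) ≤ l1 (a - b) + l1 (b - c) := by
  have h₁ := abs_sub_le a.1 b.1 c.1
  have h₂ := abs_sub_le a.2 b.2 c.2
  simp only [l1, Prod.fst_sub, Prod.snd_sub]
  linarith

lemma l2_nonneg (u : ℝ × ℝ) : 0 ≤ l2 u :=
  Real.sqrt_nonneg _

lemma l2_sub_comm (a b : ℝ × ℝ) : l2 (a - b) = l2 (b - a) := by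
  simp only [l2, Prod.fst_sub, Prod.snd_sub]
  congr 1
  ring

-- `r` stands for the crossing time `ℓ / v` of the highway.
def highwayTime (r : ℝ) (p f t t' : ℝ × ℝ) : ℝ :=
  min (l1 (p - f)) (min (l1 (p - t) + r + l1 (t' - f)) (l1 (p - t') + r + l1 (t - f)))

def endpointTime (r : ℝ) (p f t : ℝ × ℝ) : ℝ :=
  min (l1 (p - f)) (l1 (p - t) + r)

lemma highwayTime_comm (r : ℝ) (p f t t' : ℝ × ℝ) :
    highwayTime r p f t t' = highwayTime r p f t' t := by
  simp only [highwayTime, min_comm (l1 (p - t) + r + l1 (t' - f))]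

lemma highwayTime_self_le_endpointTime (r : ℝ) (p f t : ℝ × ℝ) :
    highwayTime r p f f t ≤ endpointTime r p f t := by
  refine le_min (min_le_left _ _) ((min_le_right _ _).trans ?_)
  rw [sub_self, l1_zero, add_zero]
  exact min_le_right _ _

lemma endpointTime_translate_le_highwayTime {r : ℝ} {f t t' : ℝ × ℝ}
    (h : l1 (t' - f) ≤ l1 (t - f) + r) (p : ℝ × ℝ) :
    endpointTime r p f (f + (t - t')) ≤ highwayTime r p f t t' := by
  refine le_min (min_le_left _ _) (le_min ?_ ?_)
  · calc endpointTime r p f (f + (t - t')) ≤ l1 (p - (f + (t - t'))) + r := min_le_right _ _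
      _ ≤ l1 (p - t) + l1 (t - (f + (t - t'))) + r := by gcongr; exact l1_sub_le _ _ _
      _ = l1 (p - t) + r + l1 (t' - f) := by rw [show t - (f + (t - t')) = t' - f by abel]; ring
  · calc endpointTime r p f (f + (t - t')) ≤ l1 (p - f) := min_le_left _ _
      _ ≤ l1 (p - t') + l1 (t' - f) := l1_sub_le _ _ _
      _ ≤ l1 (p - t') + r + l1 (t - f) := by linarith

lemma exists_endpointTime_le_highwayTime {r : ℝ} (hr : 0 ≤ r) (f t t' : ℝ × ℝ) :
    ∃ s, l2 (f - s) = l2 (t - t') ∧ ∀ p, endpointTime r p f s ≤ highwayTime r p f t t' := by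
  rcases le_total (l1 (t' - f)) (l1 (t - f)) with h | h
  · refine ⟨f + (t - t'), ?_, endpointTime_translate_le_highwayTime (by linarith)⟩
    rw [l2_sub_comm, add_sub_cancel_left]
  · refine ⟨f + (t' - t), ?_, fun p => ?_⟩
    · rw [l2_sub_comm, add_sub_cancel_left, l2_sub_comm]
    · rw [highwayTime_comm]
      exact endpointTime_translate_le_highwayTime (by linarith) p

theorem facility_at_endpoint_general
    (S : Finset (ℝ × ℝ))
    (w : ℝ × ℝ → ℝ) (hw : ∀ p ∈ S, 0 < w p)
    (ℓ v : ℝ) (hv : 1 ≤ v) :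
    sInf {c : ℝ | ∃ f t t' : ℝ × ℝ, l2 (t - t') = ℓ ∧
        c = ∑ p ∈ S, w p *
          min (l1 (p - f))
            (min (l1 (p - t) + ℓ / v + l1 (t' - f))
                 (l1 (p - t') + ℓ / v + l1 (t - f)))} =
    sInf {c : ℝ | ∃ f t : ℝ × ℝ, l2 (f - t) = ℓ ∧
        c = ∑ p ∈ S, w p * min (l1 (p - f)) (l1 (p - t) + ℓ / v)} := by
  have weighted_le {g h : ℝ × ℝ → ℝ} (hgh : ∀ p, g p ≤ h p) :
      ∑ p ∈ S, w p * g p ≤ ∑ p ∈ S, w p * h p :=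
    Finset.sum_le_sum fun p hp => mul_le_mul_of_nonneg_left (hgh p) (hw p hp).le
  apply csInf_eq_csInf_of_forall_exists_le
  · rintro _ ⟨f, t, t', htt, rfl⟩
    have hr : 0 ≤ ℓ / v := div_nonneg (htt ▸ l2_nonneg _) (by linarith)
    obtain ⟨s, hs, hle⟩ := exists_endpointTime_le_highwayTime hr f t t'
    exact ⟨_, ⟨f, s, hs.trans htt, rfl⟩, weighted_le hle⟩
  · rintro _ ⟨f, t, hft, rfl⟩
    exact ⟨_, ⟨f, f, t, hft, rfl⟩,
      weighted_le (highwayTime_self_le_endpointTime _ · f t)⟩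

/-- The facility may be assumed to be located at one of the endpoints of the highway
without changing the optimal total transportation cost. -/
theorem facility_at_endpoint
    (S : Finset (ℝ × ℝ)) (hS : S.Nonempty)
    (w : ℝ × ℝ → ℝ) (hw : ∀ p ∈ S, 0 < w p)
    (ℓ v : ℝ) (hℓ : 0 < ℓ) (hv : 1 ≤ v) :
    sInf {c : ℝ | ∃ f t t' : ℝ × ℝ, l2 (t - t') = ℓ ∧
        c = ∑ p ∈ S, w p *
          min (l1 (p - f))
            (min (l1 (p - t) + ℓ / v + l1 (t' - f))
                 (l1 (p - t') + ℓ / v + l1 (t - f)))} =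
    sInf {c : ℝ | ∃ f t : ℝ × ℝ, l2 (f - t) = ℓ ∧
        c = ∑ p ∈ S, w p * min (l1 (p - f)) (l1 (p - t) + ℓ / v)} :=
  facility_at_endpoint_general S w hw ℓ v hv
end

section
/- Let S be a finite nonempty set of points in the plane, let w_p > 0 be a weight for each p ∈ S, let ℓ > 0 and v ≥ 1, and define Φ(f,t) = Σ_{p∈S} w_p · min{‖p−f‖₁, ‖p−t‖₁ + ℓ/v} for pairs (f,t) of points of ℝ² with Euclidean distance ‖f−t‖₂ = ℓ. If the minimum of Φ over all such pairs is attained, then there exists a minimizing pair (f,t) that satisfies at least one of the following two conditions: (a) f or t is a vertex of the grid G(S); (b) one of the two points f, t has its y-coordinate equal to the y-coordinate of some point of S, and the other has its x-coordinate equal to the x-coordinate of some point of S. -/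
/-- `u` is a vertex of the grid `G(S)`: its x-coordinate is the x-coordinate of some point
of `S` and its y-coordinate is the y-coordinate of some point of `S`. -/
def IsGridVertex (S : Finset (ℝ × ℝ)) (u : ℝ × ℝ) : Prop :=
  (∃ p ∈ S, u.1 = p.1) ∧ (∃ q ∈ S, u.2 = q.2)


/-!
Translating a highway `(f, t)` preserves its length. Along a horizontal translation by `s`, the
travel time of `p` is the minimum of `|p.1 - f.1 - s| + const` and `|p.1 - t.1 - s| + const`,
so the cost is concave in `s` between consecutive breakpoints `p.1 - f.1`, `p.1 - t.1`; hence an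
optimal highway can be slid horizontally, staying optimal, until `f` or `t` has the
x-coordinate of a point of `S`. A vertical slide then fixes a y-coordinate without moving the
x-coordinates, and the four possible outcomes are exactly conditions (a) and (b).
-/

open Set

lemma concaveOn_abs_sub_Icc {a α z : ℝ} (ha : a ∉ Ioo α z) :
    ConcaveOn ℝ (Icc α z) (fun s => |a - s|) := by
  rcases le_or_gt a α with haα | hαa
  · refine ((concaveOn_id (convex_Icc α z)).add_const (-a)).congr fun s hs => ?_
    rw [abs_of_nonpos (by linarith [hs.1] : a - s ≤ 0)]
    simp only [Pi.add_apply, id_eq]; ring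
  · have hza : z ≤ a := not_lt.1 fun h => ha ⟨hαa, h⟩
    refine ((convexOn_id (convex_Icc α z)).neg.add_const a).congr fun s hs => ?_
    rw [abs_of_nonneg (by linarith [hs.2] : 0 ≤ a - s)]
    simp only [Pi.add_apply, Pi.neg_apply, id_eq]; ring

lemma exists_mem_isMinOn_of_concaveOn_gaps {A : Finset ℝ} (hA : A.Nonempty) {G : ℝ → ℝ}
    (hG : ∀ α z, (∀ x ∈ A, x ∉ Ioo α z) → ConcaveOn ℝ (Icc α z) G) {x₀ : ℝ}
    (hx₀ : IsMinOn G univ x₀) : ∃ a ∈ A, IsMinOn G univ a := by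
  by_cases hmem : x₀ ∈ A
  · exact ⟨x₀, hmem, hx₀⟩
  -- `x₀` is the midpoint of a gap of `A` one of whose ends is a point `a ∈ A` nearest to `x₀`.
  obtain ⟨a, ha, hnearest⟩ := A.exists_min_image (fun x => |x - x₀|) hA
  set d := |a - x₀|
  have hd : 0 < d := abs_pos.2 (sub_ne_zero.2 (ne_of_mem_of_not_mem ha hmem))
  have hgap : ∀ x ∈ A, x ∉ Ioo (x₀ - d) (x₀ + d) := fun x hx hx' =>
    (hnearest x hx).not_gt (abs_sub_lt_iff.2 ⟨by linarith [hx'.2], by linarith [hx'.1]⟩)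
  have hmid := (hG _ _ hgap).2 (left_mem_Icc.2 (by linarith)) (right_mem_Icc.2 (by linarith))
    (by norm_num : (0 : ℝ) ≤ 1 / 2) (by norm_num : (0 : ℝ) ≤ 1 / 2) (by norm_num)
  have hcenter : (1 / 2 : ℝ) • (x₀ - d) + (1 / 2 : ℝ) • (x₀ + d) = x₀ := by
    simp only [smul_eq_mul]; ring
  rw [hcenter, smul_eq_mul, smul_eq_mul] at hmid
  have hleft := isMinOn_univ_iff.1 hx₀ (x₀ - d)
  have hright := isMinOn_univ_iff.1 hx₀ (x₀ + d)
  refine ⟨a, ha, isMinOn_univ_iff.2 fun s => le_trans ?_ (isMinOn_univ_iff.1 hx₀ s)⟩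
  rcases abs_choice (a - x₀) with h | h
  · rw [show a = x₀ + d by linarith]; linarith
  · rw [show a = x₀ - d by linarith]; linarith

lemma exists_isMinOn_sum_min_abs_sub {ι : Type*} {S : Finset ι} (hS : S.Nonempty) {w : ι → ℝ}
    (hw : ∀ i ∈ S, 0 ≤ w i) {a b c d : ι → ℝ} {x₀ : ℝ}
    (hx₀ : IsMinOn (fun s => ∑ i ∈ S, w i * min (|a i - s| + c i) (|b i - s| + d i)) univ x₀) :
    ∃ i ∈ S, ∃ s, (a i = s ∨ b i = s) ∧
      IsMinOn (fun s => ∑ i ∈ S, w i * min (|a i - s| + c i) (|b i - s| + d i)) univ s := by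
  classical
  have hconcave : ∀ α z, (∀ x ∈ S.image a ∪ S.image b, x ∉ Ioo α z) →
      ConcaveOn ℝ (Icc α z)
        (fun s => ∑ i ∈ S, w i * min (|a i - s| + c i) (|b i - s| + d i)) := by
    intro α z hgap
    have hterm : ∀ i ∈ S, ConcaveOn ℝ (Icc α z)
        (fun s => w i * min (|a i - s| + c i) (|b i - s| + d i)) := by
      intro i hi
      have ha := hgap _ (Finset.mem_union_left _ (Finset.mem_image_of_mem a hi))
      have hb := hgap _ (Finset.mem_union_right _ (Finset.mem_image_of_mem b hi))
      exact (((concaveOn_abs_sub_Icc ha).add_const (c i)).inf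
        ((concaveOn_abs_sub_Icc hb).add_const (d i))).smul (hw i hi)
    have := Finset.sum_induction _ (ConcaveOn ℝ (Icc α z)) (fun _ _ => ConcaveOn.add)
      (concaveOn_const 0 (convex_Icc α z)) hterm
    rwa [Finset.sum_fn] at this
  obtain ⟨s, hs, hmin⟩ := exists_mem_isMinOn_of_concaveOn_gaps
    ((hS.image a).mono Finset.subset_union_left) hconcave hx₀
  simp only [Finset.mem_union, Finset.mem_image] at hs
  rcases hs with ⟨i, hi, rfl⟩ | ⟨i, hi, rfl⟩
  · exact ⟨i, hi, _, Or.inl rfl, hmin⟩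
  · exact ⟨i, hi, _, Or.inr rfl, hmin⟩

def IsOptimalHighway (Φ : ℝ × ℝ → ℝ × ℝ → ℝ) (ℓ : ℝ) (f t : ℝ × ℝ) : Prop :=
  l2 (f - t) = ℓ ∧ ∀ f' t', l2 (f' - t') = ℓ → Φ f t ≤ Φ f' t'

namespace IsOptimalHighway

variable {S : Finset (ℝ × ℝ)} {w : ℝ × ℝ → ℝ} {ℓ v : ℝ} {Φ : ℝ × ℝ → ℝ × ℝ → ℝ}
  {f t : ℝ × ℝ}

lemma isMinOn_translate (h : IsOptimalHighway Φ ℓ f t) (u : ℝ → ℝ × ℝ) (hu : u 0 = 0) :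
    IsMinOn (fun s => Φ (f + u s) (t + u s)) univ 0 :=
  isMinOn_univ_iff.2 fun s => by
    simpa [hu] using h.2 _ _ (by rw [add_sub_add_right_eq_sub]; exact h.1)

lemma translate_of_le (h : IsOptimalHighway Φ ℓ f t) {u : ℝ × ℝ}
    (hu : Φ (f + u) (t + u) ≤ Φ f t) : IsOptimalHighway Φ ℓ (f + u) (t + u) :=
  ⟨by rw [add_sub_add_right_eq_sub]; exact h.1, fun f' t' h' => hu.trans (h.2 f' t' h')⟩

lemma exists_translate_fst
    (hΦ : ∀ f t, Φ f t = ∑ p ∈ S, w p * min (l1 (p - f)) (l1 (p - t) + ℓ / v))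
    (hS : S.Nonempty) (hw : ∀ p ∈ S, 0 ≤ w p) (h : IsOptimalHighway Φ ℓ f t) :
    ∃ s : ℝ, IsOptimalHighway Φ ℓ (f + (s, 0)) (t + (s, 0)) ∧
      ∃ p ∈ S, f.1 + s = p.1 ∨ t.1 + s = p.1 := by
  have hΦs : (fun s : ℝ => Φ (f + (s, 0)) (t + (s, 0))) = fun s => ∑ p ∈ S,
      w p * min (|(p.1 - f.1) - s| + |p.2 - f.2|) (|(p.1 - t.1) - s| + (|p.2 - t.2| + ℓ / v)) := by
    funext s
    simp only [hΦ, l1, Prod.fst_sub, Prod.snd_sub, Prod.fst_add, Prod.snd_add, add_zero, sub_sub,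
      add_assoc]
  have h₀ := h.isMinOn_translate (fun s => (s, 0)) rfl
  rw [hΦs] at h₀
  obtain ⟨p, hp, s, hps, hs⟩ := exists_isMinOn_sum_min_abs_sub hS hw h₀
  rw [← hΦs] at hs
  have hle := isMinOn_univ_iff.1 hs 0
  simp only [Prod.mk_zero_zero, add_zero] at hle
  refine ⟨s, h.translate_of_le hle, p, hp, ?_⟩
  rcases hps with hps | hps
  · left; linarith
  · right; linarith

lemma exists_translate_snd
    (hΦ : ∀ f t, Φ f t = ∑ p ∈ S, w p * min (l1 (p - f)) (l1 (p - t) + ℓ / v))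
    (hS : S.Nonempty) (hw : ∀ p ∈ S, 0 ≤ w p) (h : IsOptimalHighway Φ ℓ f t) :
    ∃ s : ℝ, IsOptimalHighway Φ ℓ (f + (0, s)) (t + (0, s)) ∧
      ∃ p ∈ S, f.2 + s = p.2 ∨ t.2 + s = p.2 := by
  have hΦs : (fun s : ℝ => Φ (f + (0, s)) (t + (0, s))) = fun s => ∑ p ∈ S,
      w p * min (|(p.2 - f.2) - s| + |p.1 - f.1|) (|(p.2 - t.2) - s| + (|p.1 - t.1| + ℓ / v)) := by
    funext s
    refine (hΦ _ _).trans (Finset.sum_congr rfl fun p _ => ?_)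
    simp only [l1, Prod.fst_sub, Prod.snd_sub, Prod.fst_add, Prod.snd_add, add_zero, sub_sub]
    rw [add_comm |p.1 - f.1|, add_comm |p.1 - t.1|, add_assoc]
  have h₀ := h.isMinOn_translate (fun s => (0, s)) rfl
  rw [hΦs] at h₀
  obtain ⟨p, hp, s, hps, hs⟩ := exists_isMinOn_sum_min_abs_sub hS hw h₀
  rw [← hΦs] at hs
  have hle := isMinOn_univ_iff.1 hs 0
  simp only [Prod.mk_zero_zero, add_zero] at hle
  refine ⟨s, h.translate_of_le hle, p, hp, ?_⟩
  rcases hps with hps | hps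
  · left; linarith
  · right; linarith

end IsOptimalHighway

theorem optimal_highway_structure_general
    (S : Finset (ℝ × ℝ)) (hS : S.Nonempty)
    (w : ℝ × ℝ → ℝ) (hw : ∀ p ∈ S, 0 < w p)
    (ℓ v : ℝ)
    (Φ : ℝ × ℝ → ℝ × ℝ → ℝ)
    (hΦ : ∀ f t, Φ f t = ∑ p ∈ S, w p * min (l1 (p - f)) (l1 (p - t) + ℓ / v))
    (hmin : ∃ f t : ℝ × ℝ, l2 (f - t) = ℓ ∧
      ∀ f' t' : ℝ × ℝ, l2 (f' - t') = ℓ → Φ f t ≤ Φ f' t') :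
    ∃ f t : ℝ × ℝ, l2 (f - t) = ℓ ∧
      (∀ f' t' : ℝ × ℝ, l2 (f' - t') = ℓ → Φ f t ≤ Φ f' t') ∧
      (IsGridVertex S f ∨ IsGridVertex S t ∨
        ((∃ p ∈ S, f.2 = p.2) ∧ (∃ q ∈ S, t.1 = q.1)) ∨
        ((∃ p ∈ S, t.2 = p.2) ∧ (∃ q ∈ S, f.1 = q.1))) := by
  have hw₀ : ∀ p ∈ S, 0 ≤ w p := fun p hp => (hw p hp).le
  obtain ⟨f, t, hopt⟩ := hmin
  obtain ⟨s₁, hopt₁, p, hp, hx⟩ := IsOptimalHighway.exists_translate_fst hΦ hS hw₀ hopt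
  obtain ⟨s₂, hopt₂, q, hq, hy⟩ := hopt₁.exists_translate_snd hΦ hS hw₀
  refine ⟨_, _, hopt₂.1, hopt₂.2, ?_⟩
  simp only [IsGridVertex, Prod.fst_add, Prod.snd_add, add_zero] at hx hy ⊢
  rcases hx with hx | hx <;> rcases hy with hy | hy
  · exact Or.inl ⟨⟨p, hp, hx⟩, ⟨q, hq, hy⟩⟩
  · exact Or.inr <| Or.inr <| Or.inr ⟨⟨q, hq, hy⟩, ⟨p, hp, hx⟩⟩
  · exact Or.inr <| Or.inr <| Or.inl ⟨⟨q, hq, hy⟩, ⟨p, hp, hx⟩⟩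
  · exact Or.inr <| Or.inl ⟨⟨p, hp, hx⟩, ⟨q, hq, hy⟩⟩

/-- If the minimum of `Φ` over highways of length `ℓ` is attained, then some minimizing
pair `(f, t)` satisfies condition (a) or condition (b). -/
theorem optimal_highway_structure
    (S : Finset (ℝ × ℝ)) (hS : S.Nonempty)
    (w : ℝ × ℝ → ℝ) (hw : ∀ p ∈ S, 0 < w p)
    (ℓ v : ℝ) (hℓ : 0 < ℓ) (hv : 1 ≤ v)
    (Φ : ℝ × ℝ → ℝ × ℝ → ℝ)
    (hΦ : ∀ f t, Φ f t = ∑ p ∈ S, w p * min (l1 (p - f)) (l1 (p - t) + ℓ / v))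
    (hmin : ∃ f t : ℝ × ℝ, l2 (f - t) = ℓ ∧
      ∀ f' t' : ℝ × ℝ, l2 (f' - t') = ℓ → Φ f t ≤ Φ f' t') :
    ∃ f t : ℝ × ℝ, l2 (f - t) = ℓ ∧
      (∀ f' t' : ℝ × ℝ, l2 (f' - t') = ℓ → Φ f t ≤ Φ f' t') ∧
      (IsGridVertex S f ∨ IsGridVertex S t ∨
        ((∃ p ∈ S, f.2 = p.2) ∧ (∃ q ∈ S, t.1 = q.1)) ∨
        ((∃ p ∈ S, t.2 = p.2) ∧ (∃ q ∈ S, f.1 = q.1))) :=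
  optimal_highway_structure_general S hS w hw ℓ v Φ hΦ hmin
end

section
/- Let f, t, p ∈ ℝ² and c ≥ 0, and define d_t(p,f) = min{‖p−f‖₁, ‖p−t‖₁ + c}. Suppose that p strictly goes directly to the facility, i.e. ‖p−f‖₁ < ‖p−t‖₁ + c, and that p is vertically aligned with f, i.e. the x-coordinate of p equals the x-coordinate of f. Then there exists δ > 0 such that for all ε ∈ (−δ, δ), d_{t+(ε,0)}(p, f+(ε,0)) = d_t(p,f) + |ε|; that is, translating the highway horizontally in either direction increases the travel time of p. -/
/-- Travel time with facility `f`, highway entry `t`, traversal time `c`. -/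
def travelTime (c : ℝ) (t f p : ℝ × ℝ) : ℝ :=
  min (l1 (p - f)) (l1 (p - t) + c)

/-!
Shifting `f` horizontally by `ε` lengthens the walk of a point aligned with `f` by exactly `|ε|`,
while shifting `t` by `ε` shortens the highway route by at most `|ε|`. So as long as `2|ε|` is
below the strict gap `‖p - t‖₁ + c - ‖p - f‖₁`, walking remains optimal and costs `|ε|` more.
-/

lemma l1_sub_add_horizontal_of_fst_eq {p f : ℝ × ℝ} (hx : p.1 = f.1) (ε : ℝ) :
    l1 (p - (f + (ε, 0))) = l1 (p - f) + |ε| := by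
  simp only [l1, Prod.fst_sub, Prod.snd_sub, Prod.fst_add, Prod.snd_add, add_zero, hx,
    sub_self, sub_add_cancel_left, abs_neg, abs_zero, zero_add]
  ring

lemma l1_sub_sub_abs_le_l1_sub_add_horizontal (p t : ℝ × ℝ) (ε : ℝ) :
    l1 (p - t) - |ε| ≤ l1 (p - (t + (ε, 0))) := by
  have h := abs_sub_abs_le_abs_sub (p.1 - t.1) ε
  simp only [l1, Prod.fst_sub, Prod.snd_sub, Prod.fst_add, Prod.snd_add, add_zero]
  rw [sub_sub] at h
  linarith

lemma travelTime_eq_of_walk_le {c : ℝ} {t f p : ℝ × ℝ} (h : l1 (p - f) ≤ l1 (p - t) + c) :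
    travelTime c t f p = l1 (p - f) :=
  min_eq_left h

theorem travelTime_aligned_walker_general
    (f t p : ℝ × ℝ) (c : ℝ)
    (hwalk : l1 (p - f) < l1 (p - t) + c)
    (hx : p.1 = f.1) :
    ∃ δ > 0, ∀ ε : ℝ, -δ < ε → ε < δ →
      travelTime c (t + (ε, 0)) (f + (ε, 0)) p = travelTime c t f p + |ε| := by
  refine ⟨(l1 (p - t) + c - l1 (p - f)) / 2, by linarith, fun ε hlo hhi => ?_⟩
  have hε : |ε| < (l1 (p - t) + c - l1 (p - f)) / 2 := abs_lt.2 ⟨hlo, hhi⟩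
  have hshift := l1_sub_sub_abs_le_l1_sub_add_horizontal p t ε
  rw [travelTime_eq_of_walk_le hwalk.le, travelTime_eq_of_walk_le,
    l1_sub_add_horizontal_of_fst_eq hx]
  rw [l1_sub_add_horizontal_of_fst_eq hx]
  linarith

/-- If `p` strictly walks to the facility and is vertically aligned with `f`, then a small
horizontal translation of the highway by `ε` increases the travel time by `|ε|`. -/
theorem travelTime_aligned_walker
    (f t p : ℝ × ℝ) (c : ℝ) (hc : 0 ≤ c)
    (hwalk : l1 (p - f) < l1 (p - t) + c)
    (hx : p.1 = f.1) :
    ∃ δ > 0, ∀ ε : ℝ, -δ < ε → ε < δ →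
      travelTime c (t + (ε, 0)) (f + (ε, 0)) p = travelTime c t f p + |ε| :=
  travelTime_aligned_walker_general f t p c hwalk hx
end

section
/- Let a = (−4, 0) and b = (−3, −1), let y₀ ∈ {5, 7, 8}, and let C = { e ∈ ℝ² : (e₁ − 12)² + (e₂ − y₀)² = 180 and e₁ ≤ 12 } be the left half of the circle of Euclidean radius √180 centered at (12, y₀). Let e* = (12 − √(180 − y₀²), 0), which belongs to C. Then for every e ∈ C, ‖a − e*‖₁ + ‖b − e*‖₁ ≤ ‖a − e‖₁ + ‖b − e‖₁; that is, among the possible locations of the second highway endpoint, the sum of L1 distances from a and b is minimized at the point of C lying on the line y = 0. -/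
lemma l1_sub_of_fst_le {p e : ℝ × ℝ} (h : p.1 ≤ e.1) : l1 (p - e) = e.1 - p.1 + |e.2 - p.2| := by
  rw [l1, Prod.fst_sub, Prod.snd_sub, abs_sub_comm, abs_of_nonneg (sub_nonneg.2 h), abs_sub_comm]

lemma one_add_two_mul_max_le_abs_add_abs (y : ℝ) : 1 + 2 * max y 0 ≤ |y| + |y + 1| := by
  rcases le_total y 0 with hy | hy
  · rw [max_eq_right hy]
    linarith [neg_le_abs y, le_abs_self (y + 1)]
  · rw [max_eq_left hy]
    linarith [le_abs_self y, le_abs_self (y + 1)]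

lemma le_add_max_of_sq_add_sq_eq {r s y y₀ : ℝ} (hy₀ : 0 ≤ y₀) (hs : y₀ ≤ s)
    (h : r ^ 2 + (y - y₀) ^ 2 = s ^ 2 + y₀ ^ 2) : r ≤ s + max y 0 := by
  have hbound : 0 ≤ s + max y 0 := by linarith [le_max_right y 0]
  refine (le_abs_self r).trans (abs_le_of_sq_le_sq ?_ hbound)
  rcases le_total y 0 with hy | hy
  · rw [max_eq_right hy]
    nlinarith [mul_nonneg_of_nonpos_of_nonpos hy (by linarith : y - 2 * y₀ ≤ 0)]
  · rw [max_eq_left hy]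
    nlinarith [mul_nonneg hy (by linarith : 0 ≤ s - y₀)]

/-- Among the points of the left half of the circle of radius `√180` centered at
`(12, y₀)`, `y₀ ∈ {5,7,8}`, the sum of L1 distances from `a = (-4,0)` and `b = (-3,-1)`
is minimized at the point `e* = (12 - √(180 - y₀²), 0)` on the line `y = 0`. -/
theorem optimal_endpoint_on_axis (y₀ : ℝ) (hy₀ : y₀ = 5 ∨ y₀ = 7 ∨ y₀ = 8) :
    ((12 - Real.sqrt (180 - y₀ ^ 2) : ℝ), (0 : ℝ)) ∈
      {e : ℝ × ℝ | (e.1 - 12) ^ 2 + (e.2 - y₀) ^ 2 = 180 ∧ e.1 ≤ 12} ∧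
    ∀ e ∈ {e : ℝ × ℝ | (e.1 - 12) ^ 2 + (e.2 - y₀) ^ 2 = 180 ∧ e.1 ≤ 12},
      l1 (((-4 : ℝ), (0 : ℝ)) - ((12 - Real.sqrt (180 - y₀ ^ 2) : ℝ), (0 : ℝ))) +
      l1 (((-3 : ℝ), (-1 : ℝ)) - ((12 - Real.sqrt (180 - y₀ ^ 2) : ℝ), (0 : ℝ))) ≤
      l1 (((-4 : ℝ), (0 : ℝ)) - e) + l1 (((-3 : ℝ), (-1 : ℝ)) - e) := by
  obtain ⟨hy₀_nonneg, hy₀_sq⟩ : 0 ≤ y₀ ∧ 2 * y₀ ^ 2 ≤ 180 := by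
    rcases hy₀ with rfl | rfl | rfl <;> norm_num
  set s := Real.sqrt (180 - y₀ ^ 2)
  have hs_sq : s ^ 2 = 180 - y₀ ^ 2 := Real.sq_sqrt (by linarith)
  have hs_ge : y₀ ≤ s := Real.le_sqrt_of_sq_le (by linarith)
  have hs_le : s ≤ 15 := by nlinarith
  refine ⟨⟨by simp only; linear_combination hs_sq, by simp only; linarith⟩, ?_⟩
  rintro ⟨x, y⟩ ⟨hcircle, -⟩
  have hr := le_add_max_of_sq_add_sq_eq hy₀_nonneg hs_ge
    (show (12 - x) ^ 2 + (y - y₀) ^ 2 = s ^ 2 + y₀ ^ 2 by linear_combination hcircle - hs_sq)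
  have hx_ge : -3 ≤ x := by nlinarith
  rw [l1_sub_of_fst_le (by simp only; linarith), l1_sub_of_fst_le (by simp only; linarith),
    l1_sub_of_fst_le (by simp only; linarith), l1_sub_of_fst_le (by simp only; linarith)]
  have hy := one_add_two_mul_max_le_abs_add_abs y
  simp only [sub_zero, sub_neg_eq_add, zero_add, abs_zero, abs_one]
  linarith
end

section
/- Let S = {(−4,0), (−3,−1), (12,8), (13,5), (13,7)} with unit weights, and define Φ(f,t) = Σ_{p∈S} min{‖p−f‖₁, ‖p−t‖₁ + 1}. For ε ∈ [12 − √155, 12 − √131], let t_ε = (ε, 0) and f_ε = (12, √(36 + 24ε − ε²)), so that f_ε and t_ε are at Euclidean distance √180 and f₀ = (12,6), t₀ = (0,0). Then for every such ε, Φ(f_ε, t_ε) − Φ(f₀, t₀) = 2ε − (√(36 + 24ε − ε²) − 6). -/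
/-- The five demand points of the counterexample instance. -/
noncomputable def Spts : Finset (ℝ × ℝ) :=
  {((-4 : ℝ), (0 : ℝ)), ((-3 : ℝ), (-1 : ℝ)), ((12 : ℝ), (8 : ℝ)),
   ((13 : ℝ), (5 : ℝ)), ((13 : ℝ), (7 : ℝ))}

/-- Total transportation cost (unit weights, traversal time 1). -/
noncomputable def Phi (f t : ℝ × ℝ) : ℝ :=
  ∑ p ∈ Spts, min (l1 (p - f)) (l1 (p - t) + 1)

open Set

lemma sum_Spts (g : ℝ × ℝ → ℝ) :
    ∑ p ∈ Spts, g p = g (-4, 0) + g (-3, -1) + g (12, 8) + g (13, 5) + g (13, 7) := by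
  norm_num [Spts, Finset.sum_insert, Prod.ext_iff]
  ring

lemma Phi_eq_of_mem_Icc {ε y : ℝ} (hε : ε ∈ Icc (-3) 12) (hy : y ∈ Icc 5 7) :
    Phi (12, y) (ε, 0) = 22 + 2 * ε - y := by
  obtain ⟨hε₀, hε₁⟩ := hε
  obtain ⟨hy₀, hy₁⟩ := hy
  simp only [Phi, sum_Spts, l1, Prod.mk_sub_mk]
  simp (disch := grind) only [abs_of_nonneg, abs_of_nonpos, min_eq_left, min_eq_right]
  ring

lemma sq_twelve_sub_mem_Icc {ε : ℝ} (h1 : 12 - √155 ≤ ε) (h2 : ε ≤ 12 - √131) :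
    (12 - ε) ^ 2 ∈ Icc 131 155 := by
  have h131 : √131 ≤ 12 - ε := by linarith
  have hpos : 0 ≤ 12 - ε := (Real.sqrt_nonneg _).trans h131
  exact ⟨(Real.sqrt_le_left hpos).1 h131,
    (Real.le_sqrt hpos (by norm_num)).1 (by linarith)⟩

lemma sqrt_mem_Icc_of_sq_twelve_sub_mem_Icc {ε : ℝ} (h : (12 - ε) ^ 2 ∈ Icc 131 155) :
    √(36 + 24 * ε - ε ^ 2) ∈ Icc 5 7 := by
  obtain ⟨h₀, h₁⟩ := h
  exact ⟨(Real.le_sqrt (by norm_num) (by nlinarith)).2 (by nlinarith),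
    (Real.sqrt_le_left (by norm_num)).2 (by nlinarith)⟩

/-- The change of the objective function along the one-parameter family of highways
`t_ε = (ε, 0)`, `f_ε = (12, √(36 + 24ε - ε²))` equals `2ε - (√(36 + 24ε - ε²) - 6)`. -/
theorem perturbation_cost_change (ε : ℝ)
    (h1 : 12 - Real.sqrt 155 ≤ ε) (h2 : ε ≤ 12 - Real.sqrt 131) :
    Phi ((12 : ℝ), Real.sqrt (36 + 24 * ε - ε ^ 2)) ((ε : ℝ), (0 : ℝ)) -
      Phi ((12 : ℝ), (6 : ℝ)) ((0 : ℝ), (0 : ℝ)) =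
    2 * ε - (Real.sqrt (36 + 24 * ε - ε ^ 2) - 6) := by
  have hsq := sq_twelve_sub_mem_Icc h1 h2
  have hε : ε ∈ Icc (-3) 12 :=
    ⟨by nlinarith [hsq.2], by linarith [Real.sqrt_nonneg 131]⟩
  rw [Phi_eq_of_mem_Icc hε (sqrt_mem_Icc_of_sq_twelve_sub_mem_Icc hsq),
    Phi_eq_of_mem_Icc (by norm_num) (by norm_num)]
  ring
end
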